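/- Let n ≥ 2, let g_1,…,g_n be real constants, and define Q : ℝ^n × ℝ^n → ℝ by Q(x,y) = exp(−Σ_{i=1}^{n} (e^{x_i − y_i} + g_i e^{y_{i+1} − x_i})), where indices are taken cyclically, i.e. y_{n+1} := y_1. Then for all (x,y): (−(1/2) Σ_{i=1}^n ∂²/∂x_i² + Σ_{i=1}^n g_i e^{x_{i+1}−x_i}) Q(x,y) = (−(1/2) Σ_{i=1}^n ∂²/∂y_i² + Σ_{i=1}^n g_i e^{y_{i+1}−y_i}) Q(x,y), with x_{n+1} := x_1. -/

import Mathlib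

/-- Second partial derivative of `f` along the `i`-th coordinate at the point `p`. -/
noncomputable def pd2 (f : (ℕ → ℝ) → ℝ) (i : ℕ) (p : ℕ → ℝ) : ℝ :=
  deriv (deriv (fun t => f (Function.update p i t))) (p i)

/-!
Write `Q = exp (-S)` with `S = ∑ᵢ (aᵢ + bᵢ)`, `aᵢ = e^{xᵢ - yᵢ}`, `bᵢ = gᵢ e^{y_{i+1} - xᵢ}`.
Each variable occurs in `S` only through a function `φ` with `φ'' = φ`, so
`∂²Q = (φ'² - φ) Q`: this gives `(aᵢ - bᵢ)² - (aᵢ + bᵢ)` in `xᵢ` and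
`(b_{i-1} - aᵢ)² - (b_{i-1} + aᵢ)` in `yᵢ`. The cyclic shift leaves `∑ bᵢ` and `∑ bᵢ²`
unchanged, so the two Laplacians differ by `2 ∑ aᵢ b_{i-1} - 2 ∑ aᵢ bᵢ`, and these cross terms
are exactly the potentials `∑ g_{i-1} e^{xᵢ - x_{i-1}}` and `∑ gᵢ e^{y_{i+1} - yᵢ}`.
-/

open Real Finset Function

namespace TodaChain

def cycSucc (n i : ℕ) : ℕ := if i = n then 1 else i + 1

def cycPred (n j : ℕ) : ℕ := if j = 1 then n else j - 1

lemma cycSucc_mem {n i : ℕ} (hi : i ∈ Icc 1 n) : cycSucc n i ∈ Icc 1 n := by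
  rw [mem_Icc] at *; unfold cycSucc; split_ifs <;> omega

lemma cycPred_mem {n j : ℕ} (hj : j ∈ Icc 1 n) : cycPred n j ∈ Icc 1 n := by
  rw [mem_Icc] at *; unfold cycPred; split_ifs <;> omega

lemma cycPred_cycSucc {n i : ℕ} (hi : i ∈ Icc 1 n) : cycPred n (cycSucc n i) = i := by
  rw [mem_Icc] at hi; unfold cycSucc cycPred; split_ifs <;> omega

lemma cycSucc_cycPred {n j : ℕ} (hj : j ∈ Icc 1 n) : cycSucc n (cycPred n j) = j := by
  rw [mem_Icc] at hj; unfold cycSucc cycPred; split_ifs <;> omega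

lemma sum_cycSucc {M : Type*} [AddCommMonoid M] (n : ℕ) (G : ℕ → ℕ → M) :
    ∑ i ∈ Icc 1 n, G i (cycSucc n i) = ∑ j ∈ Icc 1 n, G (cycPred n j) j := by
  refine sum_nbij' (cycSucc n) (cycPred n) (fun i => cycSucc_mem) (fun j => cycPred_mem)
    (fun i => cycPred_cycSucc) (fun j => cycSucc_cycPred) fun i hi => ?_
  rw [cycPred_cycSucc hi]

lemma sum_Icc_cycSucc {M : Type*} [AddCommMonoid M] {n : ℕ} (hn : 1 ≤ n) (F : ℕ → ℕ → M) :
    ∑ i ∈ Icc 1 n, F i (cycSucc n i) = ∑ i ∈ Icc 1 (n - 1), F i (i + 1) + F n 1 := by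
  obtain ⟨m, rfl⟩ : ∃ m, n = m + 1 := ⟨n - 1, by omega⟩
  rw [sum_Icc_succ_top (by omega), Nat.add_sub_cancel]
  congr 1
  · refine sum_congr rfl fun i hi => ?_
    rw [mem_Icc] at hi
    rw [cycSucc, if_neg (by omega)]
  · simp [cycSucc]

lemma deriv_deriv_exp_neg_add {φ φ' φ'' : ℝ → ℝ} (c : ℝ) (h₁ : ∀ t, HasDerivAt φ (φ' t) t)
    (h₂ : ∀ t, HasDerivAt φ' (φ'' t) t) (t : ℝ) :
    deriv (deriv fun s => exp (-(φ s + c))) t = (φ' t ^ 2 - φ'' t) * exp (-(φ t + c)) := by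
  have hE : ∀ s, HasDerivAt (fun s => exp (-(φ s + c))) (exp (-(φ s + c)) * -φ' s) s :=
    fun s => ((h₁ s).add_const c).neg.exp
  have hE' : HasDerivAt (fun s => exp (-(φ s + c)) * -φ' s)
      (exp (-(φ t + c)) * -φ' t * -φ' t + exp (-(φ t + c)) * -φ'' t) t :=
    (hE t).mul (h₂ t).neg
  rw [funext fun s => (hE s).deriv, hE'.deriv]
  ring

lemma pd2_exp_neg_sum {s : Finset ℕ} {i : ℕ} (hi : i ∈ s) (φ : ℕ → ℝ → ℝ) {φ' φ'' : ℝ → ℝ}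
    (h₁ : ∀ t, HasDerivAt (φ i) (φ' t) t) (h₂ : ∀ t, HasDerivAt φ' (φ'' t) t) (p : ℕ → ℝ) :
    pd2 (fun q => exp (-∑ j ∈ s, φ j (q j))) i p
      = (φ' (p i) ^ 2 - φ'' (p i)) * exp (-∑ j ∈ s, φ j (p j)) := by
  have hsplit : ∀ t, ∑ j ∈ s, φ j (update p i t j) = φ i t + ∑ j ∈ s.erase i, φ j (p j) := by
    intro t
    rw [← add_sum_erase _ _ hi, update_self]
    congr 1
    exact sum_congr rfl fun j hj => by rw [update_of_ne (ne_of_mem_erase hj)]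
  unfold pd2
  simp_rw [hsplit]
  rw [deriv_deriv_exp_neg_add _ h₁ h₂, ← hsplit (p i), update_eq_self]

lemma hasDerivAt_exp_sub_add_mul_exp_sub (α β c d t : ℝ) :
    HasDerivAt (fun t => α * exp (t - c) + β * exp (d - t))
      (α * exp (t - c) - β * exp (d - t)) t := by
  have h := (((hasDerivAt_id t).sub_const c).exp.const_mul α).add
    (((hasDerivAt_id t).const_sub d).exp.const_mul β)
  exact h.congr_deriv (by simp; ring)

lemma hasDerivAt_exp_sub_sub_mul_exp_sub (α β c d t : ℝ) :
    HasDerivAt (fun t => α * exp (t - c) - β * exp (d - t))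
      (α * exp (t - c) + β * exp (d - t)) t := by
  have h := (((hasDerivAt_id t).sub_const c).exp.const_mul α).sub
    (((hasDerivAt_id t).const_sub d).exp.const_mul β)
  exact h.congr_deriv (by simp)

/-- With `c = b ∘ cycPred` this is the intertwining relation divided by `Q`. -/
lemma neg_half_sum_add_sum_mul_eq {ι : Type*} (s : Finset ι) (a b c : ι → ℝ)
    (h₁ : ∑ i ∈ s, c i = ∑ i ∈ s, b i) (h₂ : ∑ i ∈ s, c i ^ 2 = ∑ i ∈ s, b i ^ 2) :
    -(1 / 2) * ∑ i ∈ s, ((a i - b i) ^ 2 - (a i + b i)) + ∑ i ∈ s, a i * c i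
      = -(1 / 2) * ∑ i ∈ s, ((c i - a i) ^ 2 - (c i + a i)) + ∑ i ∈ s, a i * b i := by
  have expand : ∀ u : ι → ℝ, ∑ i ∈ s, ((a i - u i) ^ 2 - (a i + u i))
      = ∑ i ∈ s, (a i ^ 2 - a i) - 2 * ∑ i ∈ s, a i * u i + ∑ i ∈ s, u i ^ 2
        - ∑ i ∈ s, u i := by
    intro u
    simp only [mul_sum, ← sum_sub_distrib, ← sum_add_distrib]
    exact sum_congr rfl fun i _ => by ring
  have hc : ∑ i ∈ s, ((c i - a i) ^ 2 - (c i + a i)) = ∑ i ∈ s, ((a i - c i) ^ 2 - (a i + c i)) :=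
    sum_congr rfl fun i _ => by ring
  rw [hc, expand, expand, h₁, h₂]
  ring

variable (n : ℕ) (g : ℕ → ℝ)

noncomputable def todaPotential (z : ℕ → ℝ) : ℝ :=
  ∑ i ∈ Icc 1 n, g i * exp (z (cycSucc n i) - z i)

noncomputable def todaKernel (x y : ℕ → ℝ) : ℝ :=
  exp (-∑ i ∈ Icc 1 n, (exp (x i - y i) + g i * exp (y (cycSucc n i) - x i)))

lemma todaKernel_eq_sum_cycPred (x y : ℕ → ℝ) :
    todaKernel n g x y
      = exp (-∑ j ∈ Icc 1 n, (g (cycPred n j) * exp (y j - x (cycPred n j))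
          + exp (x j - y j))) := by
  rw [todaKernel, sum_add_distrib, sum_cycSucc n fun i j => g i * exp (y j - x i),
    ← sum_add_distrib]
  exact congrArg _ (congrArg _ (sum_congr rfl fun _ _ => by rw [add_comm]))

lemma pd2_todaKernel_left {i : ℕ} (hi : i ∈ Icc 1 n) (x y : ℕ → ℝ) :
    pd2 (fun x' => todaKernel n g x' y) i x
      = ((exp (x i - y i) - g i * exp (y (cycSucc n i) - x i)) ^ 2
          - (exp (x i - y i) + g i * exp (y (cycSucc n i) - x i))) * todaKernel n g x y := by
  simpa only [todaKernel, one_mul] using pd2_exp_neg_sum hi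
    (fun j t => 1 * exp (t - y j) + g j * exp (y (cycSucc n j) - t))
    (hasDerivAt_exp_sub_add_mul_exp_sub _ _ _ _) (hasDerivAt_exp_sub_sub_mul_exp_sub _ _ _ _) x

lemma pd2_todaKernel_right {j : ℕ} (hj : j ∈ Icc 1 n) (x y : ℕ → ℝ) :
    pd2 (fun y' => todaKernel n g x y') j y
      = ((g (cycPred n j) * exp (y j - x (cycPred n j)) - exp (x j - y j)) ^ 2
          - (g (cycPred n j) * exp (y j - x (cycPred n j)) + exp (x j - y j)))
        * todaKernel n g x y := by
  simpa only [todaKernel_eq_sum_cycPred, one_mul] using pd2_exp_neg_sum hj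
    (fun j t => g (cycPred n j) * exp (t - x (cycPred n j)) + 1 * exp (x j - t))
    (hasDerivAt_exp_sub_add_mul_exp_sub _ _ _ _) (hasDerivAt_exp_sub_sub_mul_exp_sub _ _ _ _) y

lemma todaPotential_eq_sum_mul_left (x y : ℕ → ℝ) :
    todaPotential n g x
      = ∑ j ∈ Icc 1 n, exp (x j - y j) * (g (cycPred n j) * exp (y j - x (cycPred n j))) := by
  rw [todaPotential, sum_cycSucc n fun i j => g i * exp (x j - x i)]
  refine sum_congr rfl fun j _ => ?_
  rw [mul_left_comm, ← exp_add, sub_add_sub_cancel]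

lemma todaPotential_eq_sum_mul_right (x y : ℕ → ℝ) :
    todaPotential n g y
      = ∑ i ∈ Icc 1 n, exp (x i - y i) * (g i * exp (y (cycSucc n i) - x i)) := by
  refine sum_congr rfl fun i _ => ?_
  rw [mul_left_comm, ← exp_add, add_comm, sub_add_sub_cancel]

theorem todaKernel_intertwines (x y : ℕ → ℝ) :
    -(1 / 2) * ∑ i ∈ Icc 1 n, pd2 (fun x' => todaKernel n g x' y) i x
        + todaPotential n g x * todaKernel n g x y
      = -(1 / 2) * ∑ i ∈ Icc 1 n, pd2 (fun y' => todaKernel n g x y') i y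
        + todaPotential n g y * todaKernel n g x y := by
  rw [sum_congr rfl fun i hi => pd2_todaKernel_left n g hi x y,
    sum_congr rfl fun i hi => pd2_todaKernel_right n g hi x y, ← sum_mul, ← sum_mul,
    todaPotential_eq_sum_mul_left n g x y, todaPotential_eq_sum_mul_right n g x y]
  have key := neg_half_sum_add_sum_mul_eq (Icc 1 n) (fun i => exp (x i - y i))
    (fun i => g i * exp (y (cycSucc n i) - x i))
    (fun j => g (cycPred n j) * exp (y j - x (cycPred n j)))
    (sum_cycSucc n fun i j => g i * exp (y j - x i)).symm
    (sum_cycSucc n fun i j => (g i * exp (y j - x i)) ^ 2).symm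
  linear_combination todaKernel n g x y * key

end TodaChain

open TodaChain in
/-- Pasquier–Gaudin commutation identity for the `Q`-operator of the closed (affine)
`gl_n` Toda chain: the kernel `Q(x,y) = exp(−Σ_{i=1}^{n}(e^{x_i−y_i} + g_i e^{y_{i+1}−x_i}))`
(indices cyclic, `y_{n+1} := y_1`, `x_{n+1} := x_1`) intertwines the periodic quadratic
Hamiltonian with itself. -/
theorem stmt_1 (n : ℕ) (hn : 2 ≤ n) (g : ℕ → ℝ) :
    let Q : (ℕ → ℝ) → (ℕ → ℝ) → ℝ := fun x y =>
      Real.exp (-((∑ i ∈ Finset.Icc 1 (n - 1),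
          (Real.exp (x i - y i) + g i * Real.exp (y (i + 1) - x i)))
        + Real.exp (x n - y n) + g n * Real.exp (y 1 - x n)))
    ∀ x y : ℕ → ℝ,
      -(1 / 2) * (∑ i ∈ Finset.Icc 1 n, pd2 (fun x' => Q x' y) i x)
          + ((∑ i ∈ Finset.Icc 1 (n - 1), g i * Real.exp (x (i + 1) - x i))
              + g n * Real.exp (x 1 - x n)) * Q x y
        = -(1 / 2) * (∑ i ∈ Finset.Icc 1 n, pd2 (fun y' => Q x y') i y)
          + ((∑ i ∈ Finset.Icc 1 (n - 1), g i * Real.exp (y (i + 1) - y i))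
              + g n * Real.exp (y 1 - y n)) * Q x y := by
  intro Q x y
  have hQ : ∀ x y, Q x y = todaKernel n g x y := fun x y => by
    simp only [Q]
    rw [todaKernel, sum_Icc_cycSucc (by omega) fun i j => exp (x i - y i) + g i * exp (y j - x i),
      add_assoc]
  have hV : ∀ z : ℕ → ℝ, ∑ i ∈ Icc 1 (n - 1), g i * exp (z (i + 1) - z i)
      + g n * exp (z 1 - z n) = todaPotential n g z := fun z => by
    rw [todaPotential, sum_Icc_cycSucc (by omega) fun i j => g i * exp (z j - z i)]
  simp only [hQ, hV]
  exact todaKernel_intertwines n g x y
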